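/- arXiv:1901.08106 — 11 statements merged into one kernel-verified Lean document; each statement's English description precedes it below -/
import Mathlib

section
/- Let (W, μ) be a measure space with μ a probability measure, and let φ : W × W → ℝ be antisymmetric (φ(v,w) = −φ(w,v) for all v,w) and integrable with respect to the product measure μ ⊗ μ, with each section w ↦ φ(v,w) integrable. Define the divergence div φ : W → ℝ by div φ(v) = ∫ φ(v,w) dμ(w), and define ψ : W × W → ℝ by ψ(v,w) = φ(v,w) − (div φ(v) − div φ(w)). Then ψ is antisymmetric and div ψ(v) = ∫ ψ(v,w) dμ(w) = 0 for μ-almost every v; that is, φ decomposes as the sum of the 'transitive' part grad(div φ)(v,w) = div φ(v) − div φ(w) and the 'cyclic' part ψ with vanishing divergence. -/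
/-!
The divergence of an antisymmetric integrable flow has mean zero: by Fubini,
`∫∫ φ(v,w) = ∫∫ φ(w,v) = -∫∫ φ(v,w)`. On a probability space the divergence of a
gradient `grad f` is `f` minus its mean, so `div (grad (div φ)) = div φ` and the flow
`φ - grad (div φ)` is divergence-free wherever the section `φ v` is integrable, which by
Fubini is almost everywhere.
-/

open MeasureTheory

namespace FunctionalFormGame

variable {W E : Type*} [MeasurableSpace W] {μ : Measure W}
  [NormedAddCommGroup E] [NormedSpace ℝ E]

def grad (f : W → E) (v w : W) : E := f v - f w

variable (μ) in
noncomputable def divergence (φ : W → W → E) (v : W) : E := ∫ w, φ v w ∂μ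

theorem integrable_divergence {φ : W → W → E} [SFinite μ]
    (hint : Integrable (fun x : W × W => φ x.1 x.2) (μ.prod μ)) :
    Integrable (divergence μ φ) μ :=
  hint.integral_prod_left

theorem integral_divergence_eq_zero {φ : W → W → E} [SFinite μ]
    (hanti : ∀ v w, φ v w = -φ w v)
    (hint : Integrable (fun x : W × W => φ x.1 x.2) (μ.prod μ)) :
    ∫ v, divergence μ φ v ∂μ = 0 := by
  have hswap : ∫ v, divergence μ φ v ∂μ = -∫ v, divergence μ φ v ∂μ :=
    calc ∫ v, ∫ w, φ v w ∂μ ∂μ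
        = ∫ w, ∫ v, φ v w ∂μ ∂μ := integral_integral_swap hint
      _ = ∫ w, ∫ v, -φ w v ∂μ ∂μ := by simp only [← hanti]
      _ = -∫ w, ∫ v, φ w v ∂μ ∂μ := by simp only [integral_neg]
  have : IsAddTorsionFree E := .of_isTorsionFree ℝ E
  exact self_eq_neg.mp hswap

theorem divergence_grad [CompleteSpace E] [IsProbabilityMeasure μ] {f : W → E}
    (hf : Integrable f μ) (v : W) :
    divergence μ (grad f) v = f v - ∫ w, f w ∂μ := by
  simp only [divergence, grad, integral_sub (integrable_const (f v)) hf, integral_const,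
    probReal_univ, one_smul]

theorem divergence_sub {φ ψ : W → W → E} {v : W} (hφ : Integrable (φ v) μ)
    (hψ : Integrable (ψ v) μ) :
    divergence μ (φ - ψ) v = divergence μ φ v - divergence μ ψ v :=
  integral_sub hφ hψ

theorem ae_divergence_sub_grad_divergence_eq_zero [CompleteSpace E] [IsProbabilityMeasure μ]
    {φ : W → W → E} (hanti : ∀ v w, φ v w = -φ w v)
    (hint : Integrable (fun x : W × W => φ x.1 x.2) (μ.prod μ)) :
    ∀ᵐ v ∂μ, divergence μ (φ - grad (divergence μ φ)) v = 0 := by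
  have hd := integrable_divergence hint
  filter_upwards [hint.prod_right_ae] with v hv
  rw [divergence_sub hv ((integrable_const _).sub hd), divergence_grad hd,
    integral_divergence_eq_zero hanti hint, sub_zero, sub_self]

end FunctionalFormGame

open FunctionalFormGame in
theorem ffg_hodge_decomposition_general {W : Type*} [MeasurableSpace W] (μ : Measure W)
    [IsProbabilityMeasure μ] (φ : W → W → ℝ)
    (hanti : ∀ v w, φ v w = - φ w v)
    (hint : Integrable (fun x : W × W => φ x.1 x.2) (μ.prod μ)) :
    let d : W → ℝ := fun v => ∫ w, φ v w ∂μ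
    let ψ : W → W → ℝ := fun v w => φ v w - (d v - d w)
    (∀ v w, ψ v w = - ψ w v) ∧
    (∀ᵐ v ∂μ, ∫ w, ψ v w ∂μ = 0) ∧
    (∀ v w, φ v w = (d v - d w) + ψ v w) := by
  intro d ψ
  -- `d` and `ψ` unfold to `divergence μ φ` and `φ - grad (divergence μ φ)`.
  refine ⟨fun v w => ?_, ae_divergence_sub_grad_divergence_eq_zero hanti hint,
    fun v w => (add_sub_cancel _ _).symm⟩
  simp only [ψ, hanti v w]
  ring

/-- Hodge-type decomposition of a functional-form game: subtracting the gradient of the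
divergence leaves an antisymmetric flow whose divergence vanishes almost everywhere. -/
theorem ffg_hodge_decomposition {W : Type*} [MeasurableSpace W] (μ : Measure W)
    [IsProbabilityMeasure μ] (φ : W → W → ℝ)
    (hanti : ∀ v w, φ v w = - φ w v)
    (hint : Integrable (fun x : W × W => φ x.1 x.2) (μ.prod μ))
    (hsec : ∀ v, Integrable (φ v) μ) :
    let d : W → ℝ := fun v => ∫ w, φ v w ∂μ
    let ψ : W → W → ℝ := fun v w => φ v w - (d v - d w)
    (∀ v w, ψ v w = - ψ w v) ∧
    (∀ᵐ v ∂μ, ∫ w, ψ v w ∂μ = 0) ∧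
    (∀ v w, φ v w = (d v - d w) + ψ v w) :=
  ffg_hodge_decomposition_general μ φ hanti hint
end

section
/- Let (W, μ) be a measure space with μ a probability measure, let f : W → ℝ be bounded and measurable, and let ψ : W × W → ℝ be antisymmetric (ψ(v,w) = −ψ(w,v)), integrable with respect to μ ⊗ μ, and satisfy ∫ ψ(v,w) dμ(w) = 0 for μ-almost every v. Then ∫∫ (f(v) − f(w)) · ψ(v,w) dμ(v) dμ(w) = 0; that is, every gradient flow grad(f)(v,w) = f(v) − f(w) is L²-orthogonal to every divergence-free flow. -/
/-!
Fubini turns the pairing of `grad f` with `ψ` into an integral over `μ ⊗ μ`. Swapping the two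
factors and using antisymmetry shows that the `f w` term equals minus the `f v` term, so the
pairing is twice `∫∫ f v * ψ v w`, which vanishes because its inner integral is
`f v * div ψ v = 0`.
-/

open MeasureTheory

section Flow

variable {α : Type*} [MeasurableSpace α] {μ : Measure α}

theorem integral_integral_mul_eq_zero_of_ae_integral_eq_zero {β : Type*} [MeasurableSpace β]
    {ν : Measure β} {ψ : α → β → ℝ} (hdiv : ∀ᵐ v ∂μ, ∫ w, ψ v w ∂ν = 0) (g : α → ℝ) :
    ∫ v, ∫ w, g v * ψ v w ∂ν ∂μ = 0 := by
  have h : ∀ᵐ v ∂μ, ∫ w, g v * ψ v w ∂ν = 0 := by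
    filter_upwards [hdiv] with v hv
    rw [integral_const_mul, hv, mul_zero]
  rw [integral_congr_ae h, integral_zero]

theorem integral_prod_mul_snd_eq_neg_of_antisymm [SFinite μ] {ψ : α → α → ℝ}
    (hanti : ∀ v w, ψ v w = -ψ w v) (g : α → ℝ) :
    ∫ x, g x.2 * ψ x.1 x.2 ∂μ.prod μ = -∫ x, g x.1 * ψ x.1 x.2 ∂μ.prod μ := by
  rw [← integral_prod_swap, ← integral_neg]
  congr 1 with x
  rw [Prod.snd_swap, Prod.fst_swap, hanti x.2 x.1, mul_neg]

end Flow

/-- Every gradient flow is L²-orthogonal to every divergence-free flow. -/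
theorem grad_orthogonal_divergence_free {W : Type*} [MeasurableSpace W] (μ : Measure W)
    [IsProbabilityMeasure μ] (f : W → ℝ) (C : ℝ) (hfb : ∀ x, |f x| ≤ C)
    (hfm : Measurable f)
    (ψ : W → W → ℝ) (hanti : ∀ v w, ψ v w = - ψ w v)
    (hint : Integrable (fun x : W × W => ψ x.1 x.2) (μ.prod μ))
    (hdiv : ∀ᵐ v ∂μ, ∫ w, ψ v w ∂μ = 0) :
    ∫ v, (∫ w, (f v - f w) * ψ v w ∂μ) ∂μ = 0 := by
  have hf_mul {p : W × W → W} (hp : Measurable p) :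
      Integrable (fun x => f (p x) * ψ x.1 x.2) (μ.prod μ) :=
    hint.bdd_mul (hfm.comp hp).aestronglyMeasurable (.of_forall fun x => hfb (p x))
  have h₁ := hf_mul measurable_fst
  have h₂ := hf_mul measurable_snd
  calc ∫ v, ∫ w, (f v - f w) * ψ v w ∂μ ∂μ
      = ∫ x, (f x.1 - f x.2) * ψ x.1 x.2 ∂μ.prod μ :=
        integral_integral <| (h₁.sub h₂).congr (.of_forall fun x => (sub_mul ..).symm)
    _ = ∫ x, f x.1 * ψ x.1 x.2 ∂μ.prod μ - ∫ x, f x.2 * ψ x.1 x.2 ∂μ.prod μ := by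
        simp_rw [sub_mul]; exact integral_sub h₁ h₂
    _ = 2 * ∫ v, ∫ w, f v * ψ v w ∂μ ∂μ := by
        rw [integral_prod_mul_snd_eq_neg_of_antisymm hanti, integral_integral h₁]; ring
    _ = 0 := by
        rw [integral_integral_mul_eq_zero_of_ae_integral_eq_zero hdiv, mul_zero]
end

section
/- For every real antisymmetric n × n matrix A (i.e. Aᵀ = −A) with n ≥ 1, there exists a probability vector p ∈ ℝⁿ (entries nonnegative, summing to 1) such that (pᵀA)_j ≥ 0 for every coordinate j. In other words, every symmetric zero-sum matrix game admits a Nash equilibrium strategy p with pᵀA ⪰ 0. -/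
/-!
The matrix game `(x, y) ↦ yᵀAx` on two standard simplices has a saddle point `(x, p)` by
von Neumann's minimax theorem (a special case of Sion's). When `A` is antisymmetric,
`xᵀAx = 0`, so the saddle-point inequality gives `pᵀA eⱼ ≥ xᵀAx = 0` for every pure strategy `j`.
-/

open Matrix

theorem Matrix.vecMul_dotProduct_self_eq_zero {n R : Type*} [Fintype n] [CommRing R]
    [NoZeroDivisors R] [CharZero R] {A : Matrix n n R} (hA : Aᵀ = -A) (x : n → R) :
    x ᵥ* A ⬝ᵥ x = 0 := by
  rw [← self_eq_neg]
  calc x ᵥ* A ⬝ᵥ x = x ᵥ* Aᵀ ⬝ᵥ x := by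
        rw [vecMul_transpose, ← dotProduct_mulVec, dotProduct_comm]
    _ = -(x ᵥ* A ⬝ᵥ x) := by rw [hA, vecMul_neg, neg_dotProduct]

theorem Matrix.exists_isSaddlePointOn_stdSimplex {m n : Type*} [Fintype m] [Fintype n]
    [Nonempty m] [Nonempty n] (A : Matrix m n ℝ) :
    ∃ x ∈ stdSimplex ℝ n, ∃ y ∈ stdSimplex ℝ m,
      IsSaddlePointOn (stdSimplex ℝ n) (stdSimplex ℝ m) (fun x y ↦ y ᵥ* A ⬝ᵥ x) x y := by
  refine Sion.exists_isSaddlePointOn (Set.nonempty_coe_sort.mp inferInstance)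
    (convex_stdSimplex ℝ n) (isCompact_stdSimplex ℝ n) (fun y _ ↦ ?_) (fun y _ ↦ ?_)
    (convex_stdSimplex ℝ m) (Set.nonempty_coe_sort.mp inferInstance) (isCompact_stdSimplex ℝ m)
    (fun x _ ↦ ?_) (fun x _ ↦ ?_)
  · exact (continuous_const.dotProduct continuous_id).lowerSemicontinuous.lowerSemicontinuousOn _
  · exact ((dotProductBilin ℝ ℝ (y ᵥ* A)).convexOn (convex_stdSimplex ℝ n)).quasiconvexOn
  · exact ((continuous_id.matrix_vecMul continuous_const).dotProduct
      continuous_const).upperSemicontinuous.upperSemicontinuousOn _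
  · exact ((((dotProductBilin ℝ ℝ).flip x).comp (vecMulLinear A)).concaveOn
      (convex_stdSimplex ℝ m)).quasiconcaveOn

theorem Matrix.exists_mem_stdSimplex_vecMul_nonneg {n : Type*} [Fintype n] [Nonempty n]
    {A : Matrix n n ℝ} (hA : Aᵀ = -A) : ∃ p ∈ stdSimplex ℝ n, 0 ≤ p ᵥ* A := by
  classical
  obtain ⟨x, hx, p, hp, hsaddle⟩ := A.exists_isSaddlePointOn_stdSimplex
  refine ⟨p, hp, fun j ↦ ?_⟩
  simpa only [vecMul_dotProduct_self_eq_zero hA, dotProduct_single, mul_one, Pi.zero_apply] using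
    hsaddle (Pi.single j 1) (single_mem_stdSimplex ℝ j) x hx

/-- Every symmetric zero-sum matrix game (antisymmetric payoff matrix) admits a
Nash equilibrium strategy `p` with `pᵀA ⪰ 0`. -/
theorem antisymmetric_game_has_nash {n : ℕ} (hn : 1 ≤ n)
    (A : Matrix (Fin n) (Fin n) ℝ) (hA : Aᵀ = -A) :
    ∃ p : Fin n → ℝ, (∀ i, 0 ≤ p i) ∧ (∑ i, p i = 1) ∧
      ∀ j, 0 ≤ ∑ i, p i * A i j := by
  have : Nonempty (Fin n) := ⟨⟨0, hn⟩⟩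
  obtain ⟨p, ⟨hp_nonneg, hp_sum⟩, hpA⟩ := exists_mem_stdSimplex_vecMul_nonneg hA
  exact ⟨p, hp_nonneg, hp_sum, hpA⟩
end

section
/- Let σ : ℝ → ℝ be a nondecreasing function, let f : Fin m → ℝ and g : Fin n → ℝ with m, n ≥ 1, and define the m × n matrix A by A_{ij} = σ(f(i) − g(j)). Let i* maximize f and j* maximize g. Then the pure strategy pair (e_{i*}, e_{j*}) is a saddle point of the zero-sum game on A: for all probability vectors p ∈ ℝᵐ and q ∈ ℝⁿ, pᵀ A e_{j*} ≤ e_{i*}ᵀ A e_{j*} ≤ e_{i*}ᵀ A q; consequently the value of the game equals σ(max_i f(i) − max_j g(j)), so the relative population performance compares the best agents in each population. -/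
/-! Since `σ` is monotone, `A i j = σ (f i - g j)` increases in `f i` and decreases in `g j`.
Hence the best row `istar` dominates every other row entrywise and the best column `jstar`
is entrywise the smallest entry of row `istar`; averaging against a probability vector
preserves these pointwise bounds. -/

open Finset

section WeightedSum

variable {ι R : Type*} [Semiring R] [PartialOrder R] [IsOrderedRing R]
  {s : Finset ι} {w x : ι → R} {c : R}

theorem Finset.sum_mul_le_of_forall_le (hw : ∀ i ∈ s, 0 ≤ w i) (hws : ∑ i ∈ s, w i = 1)
    (hx : ∀ i ∈ s, x i ≤ c) : ∑ i ∈ s, w i * x i ≤ c :=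
  calc ∑ i ∈ s, w i * x i ≤ ∑ i ∈ s, w i * c :=
        sum_le_sum fun i hi => mul_le_mul_of_nonneg_left (hx i hi) (hw i hi)
    _ = c := by rw [← sum_mul, hws, one_mul]

theorem Finset.le_sum_mul_of_forall_le (hw : ∀ i ∈ s, 0 ≤ w i) (hws : ∑ i ∈ s, w i = 1)
    (hx : ∀ i ∈ s, c ≤ x i) : c ≤ ∑ i ∈ s, x i * w i :=
  calc c = ∑ i ∈ s, c * w i := by rw [← mul_sum, hws, mul_one]
    _ ≤ ∑ i ∈ s, x i * w i :=
        sum_le_sum fun i hi => mul_le_mul_of_nonneg_right (hx i hi) (hw i hi)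

end WeightedSum

theorem Monotone.comp_sub_le_of_le {α β : Type*} [AddCommGroup α] [PartialOrder α]
    [IsOrderedAddMonoid α] [Preorder β] {σ : α → β} (hσ : Monotone σ) {a a' b b' : α}
    (ha : a ≤ a') (hb : b' ≤ b) : σ (a - b) ≤ σ (a' - b') :=
  hσ (sub_le_sub ha hb)

/-- Proposition 4(ii): in a monotonic game the pure strategy pair of best agents is a
saddle point, and the value of the game is `σ(max f − max g)`. -/
theorem monotonic_game_value {m n : ℕ} (σ : ℝ → ℝ) (hσ : Monotone σ)
    (f : Fin m → ℝ) (g : Fin n → ℝ)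
    (A : Matrix (Fin m) (Fin n) ℝ) (hA : ∀ i j, A i j = σ (f i - g j))
    (istar : Fin m) (histar : ∀ i, f i ≤ f istar)
    (jstar : Fin n) (hjstar : ∀ j, g j ≤ g jstar) :
    (∀ p : Fin m → ℝ, (∀ i, 0 ≤ p i) → (∑ i, p i = 1) →
      ∑ i, p i * A i jstar ≤ A istar jstar) ∧
    (∀ q : Fin n → ℝ, (∀ j, 0 ≤ q j) → (∑ j, q j = 1) →
      A istar jstar ≤ ∑ j, A istar j * q j) ∧
    A istar jstar = σ (f istar - g jstar) := by
  have best_row : ∀ i, A i jstar ≤ A istar jstar := fun i => by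
    simpa only [hA] using hσ.comp_sub_le_of_le (histar i) le_rfl
  have best_column : ∀ j, A istar jstar ≤ A istar j := fun j => by
    simpa only [hA] using hσ.comp_sub_le_of_le le_rfl (hjstar j)
  refine ⟨fun p hp hps => ?_, fun q hq hqs => ?_, hA istar jstar⟩
  · exact sum_mul_le_of_forall_le (fun i _ => hp i) hps fun i _ => best_row i
  · exact le_sum_mul_of_forall_le (fun j _ => hq j) hqs fun j _ => best_column j
end

section
/- Let A be a real m × k matrix and M a real n × m row-stochastic matrix (all entries nonnegative and each row sums to 1). Then the maximin value of the zero-sum game on M·A is at most the maximin value of the game on A: sup over probability vectors p ∈ ℝⁿ of (inf over probability vectors q ∈ ℝᵏ of pᵀ(MA)q) ≤ sup over probability vectors p' ∈ ℝᵐ of (inf over probability vectors q ∈ ℝᵏ of p'ᵀAq). In particular, if the convex hull of the rows of one population's evaluation payoffs is contained in that of another, the first population's relative performance against any third population is no larger. -/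
open Matrix

/-!
The strategy `p` of the row player in the game `M * A` earns exactly what the strategy `p ᵥ* M`
earns in the game `A`, and `p ᵥ* M` is again a probability vector because `M` is row-stochastic.
Hence every security level attained in `M * A` is attained in `A`.
-/

namespace Matrix

lemma sum_sum_mul_mul_eq_vecMul_dotProduct {R ι κ : Type*} [CommSemiring R] [Fintype ι]
    [Fintype κ] (B : Matrix ι κ R) (p : ι → R) (q : κ → R) :
    ∑ i, ∑ j, p i * B i j * q j = (p ᵥ* B) ⬝ᵥ q := by
  simp only [dotProduct, vecMul, Finset.sum_mul]
  exact Finset.sum_comm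

section Simplex

variable {R ι κ : Type*} [CommSemiring R] [PartialOrder R] [IsOrderedRing R]
  [Fintype ι] [Fintype κ]

lemma vecMul_mem_stdSimplex {M : Matrix ι κ R} (hM0 : ∀ i j, 0 ≤ M i j)
    (hM1 : ∀ i, ∑ j, M i j = 1) {p : ι → R} (hp : p ∈ stdSimplex R ι) :
    p ᵥ* M ∈ stdSimplex R κ := by
  refine ⟨fun j => Finset.sum_nonneg fun i _ => mul_nonneg (hp.1 i) (hM0 i j), ?_⟩
  simp only [vecMul, dotProduct]
  rw [Finset.sum_comm]
  simp only [← Finset.mul_sum, hM1, mul_one, hp.2]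

lemma dotProduct_le_of_mem_stdSimplex {v q : κ → R} {C : R} (hv : ∀ j, v j ≤ C)
    (hq : q ∈ stdSimplex R κ) : v ⬝ᵥ q ≤ C :=
  calc v ⬝ᵥ q ≤ ∑ j, C * q j :=
        Finset.sum_le_sum fun j _ => mul_le_mul_of_nonneg_right (hv j) (hq.1 j)
    _ = C := by rw [← Finset.mul_sum, hq.2, mul_one]

lemma le_dotProduct_of_mem_stdSimplex {v q : κ → R} {c : R} (hv : ∀ j, c ≤ v j)
    (hq : q ∈ stdSimplex R κ) : c ≤ v ⬝ᵥ q :=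
  calc c = ∑ j, c * q j := by rw [← Finset.mul_sum, hq.2, mul_one]
    _ ≤ v ⬝ᵥ q := Finset.sum_le_sum fun j _ => mul_le_mul_of_nonneg_right (hv j) (hq.1 j)

lemma vecMul_dotProduct_le_of_mem_stdSimplex {B : Matrix ι κ R} {C : R} (hB : ∀ i j, B i j ≤ C)
    {p : ι → R} {q : κ → R} (hp : p ∈ stdSimplex R ι) (hq : q ∈ stdSimplex R κ) :
    (p ᵥ* B) ⬝ᵥ q ≤ C :=
  dotProduct_le_of_mem_stdSimplex
    (fun j => by rw [vecMul, dotProduct_comm]; exact dotProduct_le_of_mem_stdSimplex (hB · j) hp) hq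

lemma le_vecMul_dotProduct_of_mem_stdSimplex {B : Matrix ι κ R} {c : R} (hB : ∀ i j, c ≤ B i j)
    {p : ι → R} {q : κ → R} (hp : p ∈ stdSimplex R ι) (hq : q ∈ stdSimplex R κ) :
    c ≤ (p ᵥ* B) ⬝ᵥ q :=
  le_dotProduct_of_mem_stdSimplex
    (fun j => by rw [vecMul, dotProduct_comm]; exact le_dotProduct_of_mem_stdSimplex (hB · j) hp) hq

end Simplex

section Game

variable {ι κ ρ : Type*} [Fintype ι] [Fintype κ] [Fintype ρ]

noncomputable def securityLevel (B : Matrix ι κ ℝ) (p : ι → ℝ) : ℝ :=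
  ⨅ q : stdSimplex ℝ κ, (p ᵥ* B) ⬝ᵥ q

noncomputable def maximinValue (B : Matrix ι κ ℝ) : ℝ :=
  ⨆ p : stdSimplex ℝ ι, securityLevel B p

lemma securityLevel_mul (M : Matrix ρ ι ℝ) (B : Matrix ι κ ℝ) (p : ρ → ℝ) :
    securityLevel (M * B) p = securityLevel B (p ᵥ* M) := by
  simp only [securityLevel, vecMul_vecMul]

lemma bddAbove_range_securityLevel (B : Matrix ι κ ℝ) :
    BddAbove (Set.range fun p : stdSimplex ℝ ι => securityLevel B p) := by
  obtain ⟨c, hc⟩ := (Set.finite_range fun x : ι × κ => B x.1 x.2).bddBelow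
  obtain ⟨C, hC⟩ := (Set.finite_range fun x : ι × κ => B x.1 x.2).bddAbove
  have hcB (i j) : c ≤ B i j := hc ⟨(i, j), rfl⟩
  have hBC (i j) : B i j ≤ C := hC ⟨(i, j), rfl⟩
  refine ⟨max C 0, Set.forall_mem_range.2 fun p => ?_⟩
  rcases isEmpty_or_nonempty κ with hκ | hκ
  · -- no column strategies: the infimum takes the junk value `0`
    have : IsEmpty (stdSimplex ℝ κ) := by
      rw [stdSimplex_of_isEmpty_index]; infer_instance
    simp [securityLevel, Real.iInf_of_isEmpty]
  · obtain ⟨q⟩ : Nonempty (stdSimplex ℝ κ) := inferInstance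
    have hbdd : BddBelow (Set.range fun q : stdSimplex ℝ κ => (p.1 ᵥ* B) ⬝ᵥ q) :=
      ⟨c, Set.forall_mem_range.2 fun q => le_vecMul_dotProduct_of_mem_stdSimplex hcB p.2 q.2⟩
    calc securityLevel B p ≤ (p.1 ᵥ* B) ⬝ᵥ q := ciInf_le hbdd q
      _ ≤ C := vecMul_dotProduct_le_of_mem_stdSimplex hBC p.2 q.2
      _ ≤ max C 0 := le_max_left C 0

theorem maximinValue_mul_le [Nonempty ρ] {M : Matrix ρ ι ℝ} (hM0 : ∀ i j, 0 ≤ M i j)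
    (hM1 : ∀ i, ∑ j, M i j = 1) (B : Matrix ι κ ℝ) :
    maximinValue (M * B) ≤ maximinValue B :=
  ciSup_le fun p => securityLevel_mul M B p ▸
    le_ciSup (bddAbove_range_securityLevel B) ⟨p.1 ᵥ* M, vecMul_mem_stdSimplex hM0 hM1 p.2⟩

end Game

end Matrix

theorem maximin_mono_of_row_stochastic_general {m n k : ℕ}
    (hn : 0 < n)
    (A : Matrix (Fin m) (Fin k) ℝ) (M : Matrix (Fin n) (Fin m) ℝ)
    (hM0 : ∀ i j, 0 ≤ M i j) (hM1 : ∀ i, ∑ j, M i j = 1) :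
    (⨆ p : {p : Fin n → ℝ // (∀ i, 0 ≤ p i) ∧ ∑ i, p i = 1},
      ⨅ q : {q : Fin k → ℝ // (∀ j, 0 ≤ q j) ∧ ∑ j, q j = 1},
        ∑ i, ∑ j, p.1 i * (M * A) i j * q.1 j) ≤
    (⨆ p' : {p' : Fin m → ℝ // (∀ i, 0 ≤ p' i) ∧ ∑ i, p' i = 1},
      ⨅ q : {q : Fin k → ℝ // (∀ j, 0 ≤ q j) ∧ ∑ j, q j = 1},
        ∑ i, ∑ j, p'.1 i * A i j * q.1 j) := by
  have : Nonempty (Fin n) := Fin.pos_iff_nonempty.mp hn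
  simp only [sum_sum_mul_mul_eq_vecMul_dotProduct]
  exact maximinValue_mul_le hM0 hM1 A

/-- Proposition 4(iii): if each row of one evaluation matrix is a convex combination of
rows of another (`M` row-stochastic), the maximin value of the game on `M·A` is at most
that of the game on `A`. -/
theorem maximin_mono_of_row_stochastic {m n k : ℕ}
    (hm : 0 < m) (hn : 0 < n) (hk : 0 < k)
    (A : Matrix (Fin m) (Fin k) ℝ) (M : Matrix (Fin n) (Fin m) ℝ)
    (hM0 : ∀ i j, 0 ≤ M i j) (hM1 : ∀ i, ∑ j, M i j = 1) :
    (⨆ p : {p : Fin n → ℝ // (∀ i, 0 ≤ p i) ∧ ∑ i, p i = 1},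
      ⨅ q : {q : Fin k → ℝ // (∀ j, 0 ≤ q j) ∧ ∑ j, q j = 1},
        ∑ i, ∑ j, p.1 i * (M * A) i j * q.1 j) ≤
    (⨆ p' : {p' : Fin m → ℝ // (∀ i, 0 ≤ p' i) ∧ ∑ i, p' i = 1},
      ⨅ q : {q : Fin k → ℝ // (∀ j, 0 ≤ q j) ∧ ∑ j, q j = 1},
        ∑ i, ∑ j, p'.1 i * A i j * q.1 j) :=
  maximin_mono_of_row_stochastic_general hn A M hM0 hM1
end

section
/- Let A be a real antisymmetric n × n matrix (Aᵀ = −A) and let p be a probability vector with (pᵀA)_j ≥ 0 for every j (a Nash equilibrium of the game on A). Then for every probability vector q, the vector b := qᵀA (i.e. b_j = Σ_i q_i A_{ij}) satisfies ⟨b, p⟩ ≤ 0. Consequently, any vector c ∈ ℝⁿ with ⟨c, p⟩ > 0 does not lie in the convex hull of the rows of A; adding an agent whose payoffs against the population are c strictly enlarges the empirical gamescape. -/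
open Matrix

/-! Antisymmetry turns the Nash condition `pᵀA ⪰ 0` into `A p ⪯ 0`: every row of `A` scores at
most `0` against `p`. Hence so does every nonnegative combination of rows, and the half-space
`{c | ⟨c, p⟩ ≤ 0}` contains the convex hull of the rows. -/

namespace Matrix

variable {n R : Type*} [Fintype n]

theorem mulVec_eq_neg_vecMul_of_transpose_eq_neg [CommRing R] {A : Matrix n n R}
    (hA : Aᵀ = -A) (p : n → R) : A *ᵥ p = -(p ᵥ* A) := by
  rw [← vecMul_transpose, hA, vecMul_neg]

theorem mulVec_nonpos_of_transpose_eq_neg [CommRing R] [PartialOrder R] [IsOrderedAddMonoid R]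
    {A : Matrix n n R} (hA : Aᵀ = -A) {p : n → R} (hp : 0 ≤ p ᵥ* A) : A *ᵥ p ≤ 0 := by
  rw [mulVec_eq_neg_vecMul_of_transpose_eq_neg hA]
  exact neg_nonpos.mpr hp

theorem vecMul_dotProduct_nonpos [CommSemiring R] [PartialOrder R] [IsOrderedRing R]
    {m : Type*} [Fintype m] {A : Matrix m n R} {p : n → R} (hAp : A *ᵥ p ≤ 0)
    {q : m → R} (hq : 0 ≤ q) : q ᵥ* A ⬝ᵥ p ≤ 0 := by
  rw [← dotProduct_mulVec]
  exact Finset.sum_nonpos fun i _ => mul_nonpos_of_nonneg_of_nonpos (hq i) (hAp i)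

theorem convex_setOf_dotProduct_le {𝕜 : Type*} [Field 𝕜] [LinearOrder 𝕜] [IsStrictOrderedRing 𝕜]
    (p : n → 𝕜) (r : 𝕜) : Convex 𝕜 {c : n → 𝕜 | c ⬝ᵥ p ≤ r} :=
  convex_halfSpace_le ⟨fun x y => add_dotProduct x y p, fun a x => smul_dotProduct a x p⟩ r

theorem convexHull_range_subset_setOf_dotProduct_nonpos {𝕜 : Type*} [Field 𝕜] [LinearOrder 𝕜]
    [IsStrictOrderedRing 𝕜] {m : Type*} {A : Matrix m n 𝕜} {p : n → 𝕜} (hAp : A *ᵥ p ≤ 0) :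
    convexHull 𝕜 (Set.range A) ⊆ {c | c ⬝ᵥ p ≤ 0} :=
  convexHull_min (Set.range_subset_iff.mpr hAp) (convex_setOf_dotProduct_le p 0)

end Matrix

theorem beating_nash_enlarges_gamescape_general {n : ℕ}
    (A : Matrix (Fin n) (Fin n) ℝ) (hA : Aᵀ = -A)
    (p : Fin n → ℝ)
    (hNash : ∀ j, 0 ≤ ∑ i, p i * A i j) :
    (∀ q : Fin n → ℝ, (∀ i, 0 ≤ q i) → (∑ i, q i = 1) →
      ∑ j, (∑ i, q i * A i j) * p j ≤ 0) ∧
    (∀ c : Fin n → ℝ, 0 < ∑ j, c j * p j → c ∉ convexHull ℝ (Set.range A)) := by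
  -- The sums in the statement unfold to `p ᵥ* A`, `q ᵥ* A ⬝ᵥ p` and `c ⬝ᵥ p`.
  have hAp : A *ᵥ p ≤ 0 := mulVec_nonpos_of_transpose_eq_neg hA hNash
  refine ⟨fun q hq _ => vecMul_dotProduct_nonpos hAp hq, fun c hc hmem => ?_⟩
  exact (convexHull_range_subset_setOf_dotProduct_nonpos hAp hmem).not_gt hc

/-- Proposition 5: against a Nash equilibrium `p` of an antisymmetric game, every convex
mixture of rows yields nonpositive payoff, so any payoff vector `c` with `⟨c,p⟩ > 0`
lies outside the convex hull of the rows: adding such an agent strictly enlarges the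
empirical gamescape. -/
theorem beating_nash_enlarges_gamescape {n : ℕ}
    (A : Matrix (Fin n) (Fin n) ℝ) (hA : Aᵀ = -A)
    (p : Fin n → ℝ) (hp0 : ∀ i, 0 ≤ p i) (hp1 : ∑ i, p i = 1)
    (hNash : ∀ j, 0 ≤ ∑ i, p i * A i j) :
    (∀ q : Fin n → ℝ, (∀ i, 0 ≤ q i) → (∑ i, q i = 1) →
      ∑ j, (∑ i, q i * A i j) * p j ≤ 0) ∧
    (∀ c : Fin n → ℝ, 0 < ∑ j, c j * p j → c ∉ convexHull ℝ (Set.range A)) :=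
  beating_nash_enlarges_gamescape_general A hA p hNash
end

section
/- Let A be a real antisymmetric n × n matrix (A_{ij} = −A_{ji}) and let p be a probability vector with (pᵀA)_j ≥ 0 for every j (a Nash equilibrium). Define the Nash-reweighted matrix B by B_{ij} = A_{ij} · p_i · p_j. Then (i) B is antisymmetric, and (ii) every row and every column of B sums to zero: Σ_j B_{ij} = 0 and Σ_j B_{ji} = 0 for all i. -/
/-!
Antisymmetry makes the quadratic form `pᵀAp` vanish. At a Nash equilibrium it is a sum of the
nonnegative terms `p_j (pᵀA)_j`, so each of them is zero; these terms are exactly the column sums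
of `B`, and the row sums are their negatives because `B` is again antisymmetric.
-/

namespace Matrix

variable {ι R : Type*} [Fintype ι] [CommRing R]

theorem vecMul_eq_neg_mulVec_of_transpose_eq_neg {A : Matrix ι ι R} (hA : Aᵀ = -A)
    (p : ι → R) : p ᵥ* A = -(A *ᵥ p) := by
  rw [← mulVec_transpose, hA, neg_mulVec]

theorem dotProduct_vecMul_self_eq_zero_of_transpose_eq_neg [LinearOrder R] [IsStrictOrderedRing R]
    {A : Matrix ι ι R} (hA : Aᵀ = -A) (p : ι → R) : p ⬝ᵥ (p ᵥ* A) = 0 := by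
  have h : p ⬝ᵥ (p ᵥ* A) = -(p ⬝ᵥ (p ᵥ* A)) :=
    calc p ⬝ᵥ (p ᵥ* A) = p ⬝ᵥ -(A *ᵥ p) := by rw [vecMul_eq_neg_mulVec_of_transpose_eq_neg hA]
      _ = -((p ᵥ* A) ⬝ᵥ p) := by rw [dotProduct_neg, dotProduct_mulVec]
      _ = -(p ⬝ᵥ (p ᵥ* A)) := by rw [dotProduct_comm]
  linarith

theorem mul_vecMul_eq_zero_of_nash [LinearOrder R] [IsStrictOrderedRing R]
    {A : Matrix ι ι R} (hA : Aᵀ = -A) {p : ι → R} (hp : 0 ≤ p) (hNash : 0 ≤ p ᵥ* A) (i : ι) :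
    p i * (p ᵥ* A) i = 0 :=
  (Finset.sum_eq_zero_iff_of_nonneg fun j _ => mul_nonneg (hp j) (hNash j)).mp
    (dotProduct_vecMul_self_eq_zero_of_transpose_eq_neg hA p) i (Finset.mem_univ i)

end Matrix

open Matrix

theorem nash_reweighted_rows_sum_zero_general {n : ℕ}
    (A : Matrix (Fin n) (Fin n) ℝ) (hA : ∀ i j, A i j = - A j i)
    (p : Fin n → ℝ) (hp0 : ∀ i, 0 ≤ p i)
    (hNash : ∀ j, 0 ≤ ∑ i, p i * A i j) :
    let B : Matrix (Fin n) (Fin n) ℝ := fun i j => A i j * p i * p j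
    (∀ i j, B i j = - B j i) ∧
    (∀ i, ∑ j, B i j = 0) ∧ (∀ i, ∑ j, B j i = 0) := by
  intro B
  have hB : ∀ i j, B i j = -B j i := fun i j => by
    simp only [B]
    rw [hA i j]
    ring
  have hcol : ∀ i, ∑ j, B j i = 0 := fun i =>
    calc ∑ j, B j i = p i * (p ᵥ* A) i := by
          simp only [B, vecMul, dotProduct, Finset.mul_sum]
          exact Fintype.sum_congr _ _ fun j => by ring
      _ = 0 := mul_vecMul_eq_zero_of_nash (ext fun i j => hA j i) hp0 hNash i
  refine ⟨hB, fun i => ?_, hcol⟩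
  rw [Fintype.sum_congr _ _ (hB i), Finset.sum_neg_distrib, hcol i, neg_zero]

/-- Nash-reweighting lemma: the Nash-reweighted matrix `B_{ij} = A_{ij} p_i p_j` is
antisymmetric and all its rows and columns sum to zero. -/
theorem nash_reweighted_rows_sum_zero {n : ℕ}
    (A : Matrix (Fin n) (Fin n) ℝ) (hA : ∀ i j, A i j = - A j i)
    (p : Fin n → ℝ) (hp0 : ∀ i, 0 ≤ p i) (hp1 : ∑ i, p i = 1)
    (hNash : ∀ j, 0 ≤ ∑ i, p i * A i j) :
    let B : Matrix (Fin n) (Fin n) ℝ := fun i j => A i j * p i * p j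
    (∀ i j, B i j = - B j i) ∧
    (∀ i, ∑ j, B i j = 0) ∧ (∀ i, ∑ j, B j i = 0) :=
  nash_reweighted_rows_sum_zero_general A hA p hp0 hNash
end

section
/- Let A be a real antisymmetric n × n matrix (A_{ij} = −A_{ji}), let p be a probability vector with (pᵀA)_j ≥ 0 for every j (a Nash equilibrium), and let a be an index with p_a > 0. Partition the indices into S₁ = {a}, S₂ = {i : A_{a,i} > 0}, and S₃ = {i : i ≠ a and A_{a,i} ≤ 0}, and define the 3 × 3 aggregated matrix B by B_{kl} = Σ_{i ∈ S_k} Σ_{j ∈ S_l} p_i p_j A_{ij}. Then there exists α ≥ 0 such that B₁₂ = B₂₃ = B₃₁ = α, B₂₁ = B₃₂ = B₁₃ = −α, and the diagonal of B is zero, where α = Σ_{j ∈ S₂} p_a p_j A_{a,j}; moreover α > 0 whenever there exists j with p_j > 0 and A_{a,j} > 0. That is, the aggregated meta-game is a rock-paper-scissors game. -/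
/-!
At a Nash equilibrium `p` of the antisymmetric game `A` the expected payoff `pᵀAp` vanishes,
so complementary slackness gives `p j (pᵀA)_j = 0` for every `j`. Hence the reweighted
matrix `p_i p_j A_{ij}` is antisymmetric with zero column sums, and so is its aggregation `B`
over any partition of the indices. A `3 × 3` antisymmetric matrix with zero column sums is
determined by its entry `B₀₁`, and is then the rock-paper-scissors matrix. The sign of `B₀₁`
comes from the choice of `S₂` as the indices that `a` beats.
-/

open Finset

def rpsMatrix (α : ℝ) : Matrix (Fin 3) (Fin 3) ℝ :=
  !![0, α, -α; -α, 0, α; α, -α, 0]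

theorem eq_rpsMatrix_of_antisymm_of_sum_col_eq_zero (B : Matrix (Fin 3) (Fin 3) ℝ)
    (hanti : ∀ k l, B l k = -B k l) (hcol : ∀ l, ∑ k, B k l = 0) :
    B = rpsMatrix (B 0 1) := by
  have hdiag : ∀ k, B k k = 0 := fun k => by linarith [hanti k k]
  have h0 := hcol 0
  have h1 := hcol 1
  have h2 := hcol 2
  simp only [Fin.sum_univ_three] at h0 h1 h2
  ext k l
  fin_cases k <;> fin_cases l <;>
    simp [rpsMatrix, hdiag] <;>
    linarith [hanti 0 1, hanti 0 2, hanti 1 2, hdiag 0, hdiag 1, hdiag 2]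

section BlockPayoff

variable {ι : Type*} (A : Matrix ι ι ℝ) (p : ι → ℝ)

def blockPayoff (s t : Finset ι) : ℝ :=
  ∑ i ∈ s, ∑ j ∈ t, p i * p j * A i j

theorem blockPayoff_swap (hA : ∀ i j, A i j = -A j i) (s t : Finset ι) :
    blockPayoff A p t s = -blockPayoff A p s t := by
  unfold blockPayoff
  rw [Finset.sum_comm, ← Finset.sum_neg_distrib]
  refine Finset.sum_congr rfl fun i _ => ?_
  rw [← Finset.sum_neg_distrib]
  refine Finset.sum_congr rfl fun j _ => ?_
  rw [hA j i]
  ring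

theorem blockPayoff_univ_univ [Fintype ι] (hA : ∀ i j, A i j = -A j i) :
    blockPayoff A p univ univ = 0 := by
  linarith [blockPayoff_swap A p hA univ univ]

theorem mul_sum_mul_eq_zero_of_nash [Fintype ι] (hA : ∀ i j, A i j = -A j i)
    (hp0 : ∀ i, 0 ≤ p i) (hNash : ∀ j, 0 ≤ ∑ i, p i * A i j) (j : ι) :
    p j * ∑ i, p i * A i j = 0 := by
  have hsum : ∑ j, p j * ∑ i, p i * A i j = 0 := by
    rw [← blockPayoff_univ_univ A p hA, blockPayoff, Finset.sum_comm]
    simp only [Finset.mul_sum, mul_comm, mul_left_comm]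
  exact (Finset.sum_eq_zero_iff_of_nonneg fun j _ => mul_nonneg (hp0 j) (hNash j)).mp hsum j
    (mem_univ j)

theorem blockPayoff_univ_left_of_nash [Fintype ι] (hA : ∀ i j, A i j = -A j i)
    (hp0 : ∀ i, 0 ≤ p i) (hNash : ∀ j, 0 ≤ ∑ i, p i * A i j) (t : Finset ι) :
    blockPayoff A p univ t = 0 := by
  rw [blockPayoff, Finset.sum_comm]
  refine Finset.sum_eq_zero fun j _ => ?_
  rw [← mul_sum_mul_eq_zero_of_nash A p hA hp0 hNash j, Finset.mul_sum]
  exact Finset.sum_congr rfl fun i _ => by ring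

end BlockPayoff

theorem sum_eq_add_sum_filter_pos_add_sum_filter_nonpos {ι M : Type*} [Fintype ι]
    [DecidableEq ι] [AddCommMonoid M] (x : ι → ℝ) (a : ι) (hx : x a ≤ 0) (f : ι → M) :
    ∑ i, f i = f a + ∑ i ∈ univ.filter (fun i => 0 < x i), f i
      + ∑ i ∈ univ.filter (fun i => i ≠ a ∧ x i ≤ 0), f i := by
  have hnonpos : univ.filter (fun i => ¬ 0 < x i)
      = insert a (univ.filter (fun i => i ≠ a ∧ x i ≤ 0)) := by
    ext i
    by_cases hi : i = a <;> simp [hi, hx]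
  rw [← Finset.sum_filter_add_sum_filter_not univ (fun i => 0 < x i), hnonpos,
    Finset.sum_insert (by simp)]
  abel

section PositivePart

variable {ι : Type*} [Fintype ι] (x p : ι → ℝ) (c : ℝ)

theorem sum_filter_pos_mul_nonneg (hc : 0 ≤ c) (hp0 : ∀ i, 0 ≤ p i) :
    0 ≤ ∑ j ∈ univ.filter (fun j => 0 < x j), c * p j * x j :=
  Finset.sum_nonneg fun j hj =>
    mul_nonneg (mul_nonneg hc (hp0 j)) (Finset.mem_filter.mp hj).2.le

theorem sum_filter_pos_mul_pos (hc : 0 < c) (hp0 : ∀ i, 0 ≤ p i)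
    (hx : ∃ j, 0 < p j ∧ 0 < x j) :
    0 < ∑ j ∈ univ.filter (fun j => 0 < x j), c * p j * x j := by
  obtain ⟨j, hpj, hxj⟩ := hx
  exact Finset.sum_pos'
    (fun i hi => mul_nonneg (mul_nonneg hc.le (hp0 i)) (Finset.mem_filter.mp hi).2.le)
    ⟨j, Finset.mem_filter.mpr ⟨mem_univ j, hxj⟩, mul_pos (mul_pos hc hpj) hxj⟩

end PositivePart

theorem rps_reduction_general {n : ℕ}
    (A : Matrix (Fin n) (Fin n) ℝ) (hA : ∀ i j, A i j = - A j i)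
    (p : Fin n → ℝ) (hp0 : ∀ i, 0 ≤ p i)
    (hNash : ∀ j, 0 ≤ ∑ i, p i * A i j)
    (a : Fin n) (ha : 0 < p a) :
    let S : Fin 3 → Finset (Fin n) :=
      ![{a}, Finset.univ.filter (fun i => 0 < A a i),
        Finset.univ.filter (fun i => i ≠ a ∧ A a i ≤ 0)]
    let B : Matrix (Fin 3) (Fin 3) ℝ :=
      fun k l => ∑ i ∈ S k, ∑ j ∈ S l, p i * p j * A i j
    ∃ α : ℝ, 0 ≤ α ∧
      α = ∑ j ∈ S 1, p a * p j * A a j ∧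
      B 0 1 = α ∧ B 1 2 = α ∧ B 2 0 = α ∧
      B 1 0 = -α ∧ B 2 1 = -α ∧ B 0 2 = -α ∧
      B 0 0 = 0 ∧ B 1 1 = 0 ∧ B 2 2 = 0 ∧
      ((∃ j, 0 < p j ∧ 0 < A a j) → 0 < α) := by
  intro S B
  have hcol : ∀ l, ∑ k, B k l = 0 := fun l => by
    rw [Fin.sum_univ_three, ← blockPayoff_univ_left_of_nash A p hA hp0 hNash (S l), blockPayoff,
      sum_eq_add_sum_filter_pos_add_sum_filter_nonpos (A a) a (by linarith [hA a a])]
    simp [B, S]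
  have hB := eq_rpsMatrix_of_antisymm_of_sum_col_eq_zero B
    (fun k l => blockPayoff_swap A p hA (S k) (S l)) hcol
  set α := B 0 1
  have hα : α = ∑ j ∈ S 1, p a * p j * A a j := Finset.sum_singleton _ _
  have hentry : ∀ k l, B k l = rpsMatrix α k l := fun k l => congrFun (congrFun hB k) l
  refine ⟨α, hα ▸ sum_filter_pos_mul_nonneg (A a) p (p a) ha.le hp0, hα, rfl, hentry 1 2,
    hentry 2 0, hentry 1 0, hentry 2 1, hentry 0 2, hentry 0 0, hentry 1 1, hentry 2 2,
    fun h => hα ▸ sum_filter_pos_mul_pos (A a) p (p a) ha hp0 h⟩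

/-- Rock-paper-scissors reduction: aggregating the Nash-reweighted evaluation matrix
over the blocks {a}, {agents a beats}, {agents that beat or tie a} yields a
rock-paper-scissors meta-game. -/
theorem rps_reduction {n : ℕ}
    (A : Matrix (Fin n) (Fin n) ℝ) (hA : ∀ i j, A i j = - A j i)
    (p : Fin n → ℝ) (hp0 : ∀ i, 0 ≤ p i) (hp1 : ∑ i, p i = 1)
    (hNash : ∀ j, 0 ≤ ∑ i, p i * A i j)
    (a : Fin n) (ha : 0 < p a) :
    let S : Fin 3 → Finset (Fin n) :=
      ![{a}, Finset.univ.filter (fun i => 0 < A a i),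
        Finset.univ.filter (fun i => i ≠ a ∧ A a i ≤ 0)]
    let B : Matrix (Fin 3) (Fin 3) ℝ :=
      fun k l => ∑ i ∈ S k, ∑ j ∈ S l, p i * p j * A i j
    ∃ α : ℝ, 0 ≤ α ∧
      α = ∑ j ∈ S 1, p a * p j * A a j ∧
      B 0 1 = α ∧ B 1 2 = α ∧ B 2 0 = α ∧
      B 1 0 = -α ∧ B 2 1 = -α ∧ B 0 2 = -α ∧
      B 0 0 = 0 ∧ B 1 1 = 0 ∧ B 2 2 = 0 ∧
      ((∃ j, 0 < p j ∧ 0 < A a j) → 0 < α) :=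
  rps_reduction_general A hA p hp0 hNash a ha
end

section
/- Let A be a real antisymmetric n × n matrix (Aᵀ = −A) of rank r. Then (i) r is even, and (ii) there exist matrices G of size n × r and W of size n × r with orthonormal columns (Wᵀ W = I_r) such that A = G · Wᵀ. Consequently the convex hull of the rows of A (the empirical gamescape) is the image, under the injective linear map y ↦ y Wᵀ, of the convex hull of the rows of G, a polytope in ℝʳ; i.e. the empirical gamescape of n agents can be represented in ℝʳ. -/
open Matrix

/-!
Take for `W` an orthonormal basis of the column space of `A`, written as columns. Then `W Wᵀ`
is the orthogonal projection onto that space, so `W Wᵀ A = A`, and transposing with `Aᵀ = -A`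
gives `A W Wᵀ = A`. Hence `A = G Wᵀ` with `G = A W`, and `y ↦ y Wᵀ` is injective and linear,
so it carries the convex hull of the rows of `G` onto that of the rows of `A`.
The compression `C = Wᵀ A W` is an antisymmetric `r × r` matrix with `A = W C Wᵀ`, so it has
full rank `r`; since `det C = det Cᵀ = (-1)ʳ det C`, the rank `r` must be even.
-/

theorem Submodule.exists_orthonormal_cols_mulVec_eq {m : Type*} [Fintype m]
    (S : Submodule ℝ (m → ℝ)) :
    ∃ W : Matrix m (Fin (Module.finrank ℝ S)) ℝ, Wᵀ * W = 1 ∧ ∀ x ∈ S, (W * Wᵀ) *ᵥ x = x := by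
  let e := (WithLp.linearEquiv 2 ℝ (m → ℝ)).symm
  let E := S.map e.toLinearMap
  let b : OrthonormalBasis (Fin (Module.finrank ℝ S)) ℝ E :=
    (stdOrthonormalBasis ℝ E).reindex (finCongr (e.finrank_map_eq S))
  let W : Matrix m (Fin (Module.finrank ℝ S)) ℝ := of fun i k => (b k : EuclideanSpace ℝ m) i
  have hW : ∀ c, W *ᵥ c = WithLp.ofLp (∑ k, c k • (b k : EuclideanSpace ℝ m)) := by
    intro c
    funext i
    simp [W, mulVec, dotProduct, mul_comm]
  have hWt : ∀ x, Wᵀ *ᵥ x = fun k => inner ℝ (b k : EuclideanSpace ℝ m) (WithLp.toLp 2 x) := by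
    intro x
    funext k
    simp [W, mulVec, dotProduct, EuclideanSpace.inner_eq_star_dotProduct, mul_comm]
  refine ⟨W, ?_, fun x hx => ?_⟩
  · ext k l
    have h := orthonormal_iff_ite.mp b.orthonormal k l
    rw [Submodule.coe_inner, EuclideanSpace.inner_eq_star_dotProduct] at h
    rw [mul_apply, one_apply, ← h]
    exact Finset.sum_congr rfl fun _ _ => mul_comm _ _
  · have hxE : WithLp.toLp 2 x ∈ E := ⟨x, hx, rfl⟩
    have h := congrArg (fun y : E => WithLp.ofLp (y : EuclideanSpace ℝ m)) (b.sum_repr' ⟨_, hxE⟩)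
    simpa [← mulVec_mulVec, hWt, hW] using h

namespace Matrix

variable {m n : Type*} [Fintype m] [Fintype n]

theorem exists_orthonormal_cols_mul_eq (A : Matrix m n ℝ) :
    ∃ W : Matrix m (Fin A.rank) ℝ, Wᵀ * W = 1 ∧ W * Wᵀ * A = A := by
  obtain ⟨W, hWW, hproj⟩ := (LinearMap.range A.mulVecLin).exists_orthonormal_cols_mulVec_eq
  refine ⟨W, hWW, ext_iff_mulVec.mpr fun v => ?_⟩
  rw [← mulVec_mulVec]
  exact hproj _ ⟨v, rfl⟩

theorem mul_eq_self_of_transpose_eq_neg {R : Type*} [CommRing R] {A P : Matrix m m R}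
    (hA : Aᵀ = -A) (hP : Pᵀ = P) (h : P * A = A) : A * P = A := by
  have h' := congrArg transpose h
  rwa [transpose_mul, hA, hP, neg_mul, neg_inj] at h'

theorem isUnit_of_rank_eq_card {K : Type*} [Field K] [DecidableEq m] {C : Matrix m m K}
    (h : C.rank = Fintype.card m) : IsUnit C := by
  rw [← isUnit_toLin'_iff, LinearMap.isUnit_iff_range_eq_top, toLin'_apply']
  exact Submodule.eq_top_of_finrank_eq (by rw [Module.finrank_fintype_fun_eq_card]; exact h)

theorem det_eq_zero_of_transpose_eq_neg {R : Type*} [CommRing R] [IsAddTorsionFree R]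
    [DecidableEq m] {C : Matrix m m R} (hC : Cᵀ = -C) (hodd : Odd (Fintype.card m)) :
    C.det = 0 := by
  rw [← self_eq_neg]
  calc C.det = Cᵀ.det := (det_transpose C).symm
    _ = -C.det := by rw [hC, det_neg, hodd.neg_one_pow, neg_one_mul]

theorem even_rank_of_transpose_eq_neg {A : Matrix m m ℝ} (hA : Aᵀ = -A) : Even A.rank := by
  obtain ⟨W, hWW, hWWA⟩ := A.exists_orthonormal_cols_mul_eq
  have hAWW := mul_eq_self_of_transpose_eq_neg hA (by rw [transpose_mul, transpose_transpose]) hWWA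
  set C := Wᵀ * A * W with hC
  have hAC : A = W * C * Wᵀ :=
    calc A = W * Wᵀ * A * (W * Wᵀ) := by rw [hWWA, hAWW]
      _ = W * C * Wᵀ := by simp only [hC, Matrix.mul_assoc]
  have hCT : Cᵀ = -C := by
    rw [hC, transpose_mul, transpose_mul, transpose_transpose, hA, Matrix.neg_mul, Matrix.mul_neg,
      Matrix.mul_assoc]
  have hCrank : C.rank = Fintype.card (Fin A.rank) := by
    refine le_antisymm (rank_le_card_width C) ?_
    calc Fintype.card (Fin A.rank) = (W * C * Wᵀ).rank := by rw [Fintype.card_fin, ← hAC]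
      _ ≤ (W * C).rank := rank_mul_le_left _ _
      _ ≤ C.rank := rank_mul_le_right _ _
  have hdet : C.det ≠ 0 := ((isUnit_iff_isUnit_det C).mp (isUnit_of_rank_eq_card hCrank)).ne_zero
  by_contra hodd
  exact hdet (det_eq_zero_of_transpose_eq_neg hCT (by simpa using Nat.not_even_iff_odd.mp hodd))

theorem vecMul_injective_of_mul_eq_one {R : Type*} [Semiring R] [DecidableEq m]
    {M : Matrix m n R} {N : Matrix n m R} (h : M * N = 1) :
    Function.Injective fun y : m → R => y ᵥ* M :=
  Function.LeftInverse.injective (g := fun z => z ᵥ* N) fun y => by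
    simp only [vecMul_vecMul, h, vecMul_one]

theorem convexHull_range_mul {l k R : Type*} [CommSemiring R] [PartialOrder R]
    (G : Matrix l n R) (M : Matrix n k R) :
    convexHull R (Set.range (G * M)) = (fun y => y ᵥ* M) '' convexHull R (Set.range G) := by
  have hrange : Set.range (G * M) = M.vecMulLinear '' Set.range G :=
    Set.range_comp (⇑M.vecMulLinear) G
  rw [hrange, ← LinearMap.image_convexHull]
  rfl

end Matrix

/-- Proposition 2: an antisymmetric matrix has even rank `r` and factorizes as
`A = G·Wᵀ` with `W` having orthonormal columns; consequently the empirical gamescape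
(convex hull of the rows of `A`) is the image of an `r`-dimensional polytope under an
injective linear map. -/
theorem egs_low_dim_representation {n : ℕ}
    (A : Matrix (Fin n) (Fin n) ℝ) (hA : Aᵀ = -A) :
    Even A.rank ∧
    ∃ (G : Matrix (Fin n) (Fin A.rank) ℝ) (W : Matrix (Fin n) (Fin A.rank) ℝ),
      Wᵀ * W = 1 ∧
      A = G * Wᵀ ∧
      Function.Injective (fun y : Fin A.rank → ℝ => Matrix.vecMul y Wᵀ) ∧
      convexHull ℝ (Set.range A) =
        (fun y : Fin A.rank → ℝ => Matrix.vecMul y Wᵀ) '' convexHull ℝ (Set.range G) := by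
  obtain ⟨W, hWW, hWWA⟩ := A.exists_orthonormal_cols_mul_eq
  have hAWW := mul_eq_self_of_transpose_eq_neg hA (by rw [transpose_mul, transpose_transpose]) hWWA
  have hGW : A = A * W * Wᵀ := by rw [Matrix.mul_assoc, hAWW]
  refine ⟨even_rank_of_transpose_eq_neg hA, A * W, W, hWW, hGW,
    vecMul_injective_of_mul_eq_one hWW, ?_⟩
  conv_lhs => rw [hGW]
  exact convexHull_range_mul _ _
end

section
/- Let n ≥ 3 and define the real n × n matrix C by C_{ij} = 1 if j ≡ i+1 (mod n), C_{ij} = −1 if j ≡ i−1 (mod n), and C_{ij} = 0 otherwise (so C is the antisymmetric evaluation matrix of n agents forming a single long cycle in which each agent beats the next). Then the rank of C equals n−2 if n is even and n−1 if n is odd. -/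
/-!
Index the agents by the cyclic group `Fin n`. Then `C` acts on vectors by
`(C x) i = x (i + 1) - x (i - 1)`, so `C x = 0` exactly when `x` is `2`-periodic, i.e. factors
through `Fin n ⧸ ⟨2⟩`. The kernel therefore has dimension `[Fin n : ⟨2⟩] = gcd n 2`, and
rank–nullity gives `rank C = n - gcd n 2`.
-/

open Function Matrix

section ShiftDifference

variable {K G : Type*} [Field K] [AddGroup G]

lemma mulVec_eq_shift_sub_shift [Fintype G] [DecidableEq G] {C : Matrix G G K} {a : G}
    (ha : a + a ≠ 0)
    (hC : ∀ i j, C i j = if j = i + a then 1 else if i = j + a then -1 else 0) (x : G → K) :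
    C *ᵥ x = fun i => x (i + a) - x (i - a) := by
  have hC' : ∀ i j, C i j = (if j = i + a then 1 else 0) - (if j = i - a then 1 else 0) := by
    intro i j
    have hne : i + a ≠ i - a := fun h =>
      ha (by simpa [sub_eq_add_neg, eq_neg_iff_add_eq_zero] using h)
    have hsub : i = j + a ↔ j = i - a := by rw [eq_sub_iff_add_eq, eq_comm]
    simp only [hC, hsub]
    by_cases h₁ : j = i + a <;> by_cases h₂ : j = i - a <;> simp_all
  ext i
  simp [mulVec, dotProduct, hC', sub_mul, Finset.sum_sub_distrib]

lemma shift_sub_shift_eq_zero_iff_periodic (x : G → K) (a : G) :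
    (fun i => x (i + a) - x (i - a)) = 0 ↔ Periodic x (a + a) := by
  simp only [funext_iff, Pi.zero_apply, sub_eq_zero]
  constructor
  · intro h i
    simpa [add_assoc] using h (i + a)
  · intro h i
    simpa [sub_eq_add_neg, add_assoc] using h (i - a)

lemma mem_range_funLeft_mk_iff_periodic (b : G) (x : G → K) :
    x ∈ LinearMap.range (LinearMap.funLeft K K ((↑) : G → G ⧸ AddSubgroup.zmultiples b)) ↔
      Periodic x b := by
  constructor
  · rintro ⟨y, rfl⟩ i
    simp [LinearMap.funLeft]
  · intro hx
    exact ⟨hx.lift, funext hx.lift_coe⟩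

lemma finrank_range_funLeft_mk [Finite G] (H : AddSubgroup G) :
    Module.finrank K (LinearMap.range (LinearMap.funLeft K K ((↑) : G → G ⧸ H))) = H.index := by
  classical
  have := Fintype.ofFinite G
  rw [LinearMap.finrank_range_of_inj
      (LinearMap.funLeft_injective_of_surjective K K _ QuotientAddGroup.mk_surjective),
    Module.finrank_fintype_fun_eq_card, AddSubgroup.index, Nat.card_eq_fintype_card]

theorem rank_eq_card_sub_index_zmultiples [Fintype G] [DecidableEq G] {C : Matrix G G K} {a : G}
    (ha : a + a ≠ 0)
    (hC : ∀ i j, C i j = if j = i + a then 1 else if i = j + a then -1 else 0) :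
    C.rank = Fintype.card G - (AddSubgroup.zmultiples (a + a)).index := by
  have hker : LinearMap.ker C.mulVecLin =
      LinearMap.range (LinearMap.funLeft K K ((↑) : G → G ⧸ AddSubgroup.zmultiples (a + a))) := by
    ext x
    rw [mem_range_funLeft_mk_iff_periodic, LinearMap.mem_ker, mulVecLin_apply,
      mulVec_eq_shift_sub_shift ha hC, shift_sub_shift_eq_zero_iff_periodic]
  have := LinearMap.finrank_range_add_finrank_ker C.mulVecLin
  rw [hker, finrank_range_funLeft_mk, Module.finrank_fintype_fun_eq_card] at this
  rw [Matrix.rank]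
  omega

end ShiftDifference

lemma Fin.index_zmultiples_nsmul_one (n : ℕ) [NeZero n] (k : ℕ) :
    (AddSubgroup.zmultiples (k • 1 : Fin n)).index = n.gcd k := by
  have hn : 0 < n := Nat.pos_of_neZero n
  have hord : addOrderOf (k • 1 : Fin n) = n / n.gcd k := by
    open Fin.CommRing in
    rw [addOrderOf_nsmul, CharP.eq (Fin n) (CharP.addOrderOf_one _) (Fin.charP n)]
  have h := (AddSubgroup.zmultiples (k • 1 : Fin n)).index_mul_card
  rw [Nat.card_zmultiples, hord, Nat.card_fin] at h
  exact Nat.eq_of_mul_eq_mul_right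
    (Nat.div_pos (Nat.gcd_le_left k hn) (Nat.gcd_pos_of_pos_left k hn))
    (h.trans (Nat.mul_div_cancel' (n.gcd_dvd_left k)).symm)

lemma Fin.val_eq_add_one_mod_iff {n : ℕ} [NeZero n] (i j : Fin n) :
    (j : ℕ) = ((i : ℕ) + 1) % n ↔ j = i + 1 := by
  rw [Fin.ext_iff, Fin.val_add, Fin.val_one', Nat.add_mod_mod]

/-- Example 3: the evaluation matrix of `n ≥ 3` agents forming a single long cycle has
rank `n−2` if `n` is even and `n−1` if `n` is odd. -/
theorem long_cycle_rank {n : ℕ} (hn : 3 ≤ n)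
    (C : Matrix (Fin n) (Fin n) ℝ)
    (hC : ∀ i j : Fin n,
      C i j = if (j : ℕ) = ((i : ℕ) + 1) % n then 1
        else if (i : ℕ) = ((j : ℕ) + 1) % n then -1 else 0) :
    C.rank = if Even n then n - 2 else n - 1 := by
  have : NeZero n := ⟨by omega⟩
  have htwo : (1 : Fin n) + 1 ≠ 0 := by
    rw [Ne, Fin.ext_iff, Fin.val_add, Fin.val_one', Fin.val_zero,
      Nat.one_mod_eq_one.mpr (by omega), Nat.mod_eq_of_lt (by omega)]
    omega
  have hC' : ∀ i j : Fin n, C i j = if j = i + 1 then 1 else if i = j + 1 then -1 else 0 := by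
    simpa only [Fin.val_eq_add_one_mod_iff] using hC
  rw [rank_eq_card_sub_index_zmultiples htwo hC', Fintype.card_fin, ← two_nsmul,
    Fin.index_zmultiples_nsmul_one]
  split_ifs with h
  · rw [Nat.gcd_eq_right (even_iff_two_dvd.mp h)]
  · rw [(Nat.coprime_two_right.mpr (Nat.not_even_iff_odd.mp h)).gcd_eq_one]
end

section
/- Let A be a real antisymmetric m × m matrix, M a real n × m row-stochastic matrix (nonnegative entries, each row summing to 1), N the (m+n) × m matrix formed by stacking the identity I_m on top of M, and A_Q := N · A · Nᵀ the evaluation matrix of the population enlarged by n redundant agents. Then (i) the convex hull of the rows of A_Q equals the image of the convex hull of the rows of A under the injective linear map x ↦ x · Nᵀ, and (ii) the image of the convex hull of the rows of A_Q under the projection onto the first m coordinates equals the convex hull of the rows of A. Hence the empirical gamescape is invariant to redundant agents. -/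
open Matrix

/-! The enlarged evaluation matrix is `A_Q = (N A) Nᵀ`. The rows of `N A = [A; M A]` are the
rows of `A` together with convex combinations of them, so they span the same convex hull;
multiplying on the right by `Nᵀ` is a linear map, hence carries this hull onto the hull of the
rows of `A_Q`. Since `N = [I; M]`, the first `m` coordinates of `x Nᵀ` are `x` itself, so
projecting onto them undoes the map. -/

theorem Matrix.range_fromRows {α ι κ τ : Type*} (A : Matrix ι τ α) (B : Matrix κ τ α) :
    Set.range (fromRows A B) = Set.range A ∪ Set.range B :=
  Set.Sum.elim_range A B

theorem Matrix.convexHull_range_mul_s17 {R ι κ τ : Type*} [Semiring R] [PartialOrder R] [Fintype κ]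
    (X : Matrix ι κ R) (B : Matrix κ τ R) :
    convexHull R (Set.range (X * B)) = (· ᵥ* B) '' convexHull R (Set.range X) := by
  have hrange : Set.range (X * B) = vecMulLinear B '' Set.range X :=
    Set.range_comp (vecMulLinear B) fun i => X i
  rw [hrange, ← LinearMap.image_convexHull]
  rfl

theorem Matrix.range_mul_subset_convexHull_range {R ι κ τ : Type*} [Field R] [LinearOrder R]
    [IsStrictOrderedRing R] [Fintype ι] (M : Matrix κ ι R)
    (A : Matrix ι τ R) (hM0 : ∀ i j, 0 ≤ M i j) (hM1 : ∀ i, ∑ j, M i j = 1) :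
    Set.range (M * A) ⊆ convexHull R (Set.range A) := by
  rintro _ ⟨i, rfl⟩
  rw [mul_apply_eq_vecMul, vecMul_eq_sum]
  exact (convex_convexHull R _).sum_mem (fun k _ => hM0 i k) (hM1 i)
    (fun k _ => subset_convexHull R _ ⟨k, rfl⟩)

theorem Matrix.convexHull_range_fromRows_of_subset {R ι κ τ : Type*} [Semiring R]
    [PartialOrder R] (A : Matrix ι τ R) (B : Matrix κ τ R)
    (hB : Set.range B ⊆ convexHull R (Set.range A)) :
    convexHull R (Set.range (fromRows A B)) = convexHull R (Set.range A) := by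
  rw [range_fromRows]
  refine (convexHull_min ?_ (convex_convexHull R _)).antisymm
    (convexHull_mono Set.subset_union_left)
  exact Set.union_subset (subset_convexHull R _) hB

theorem Matrix.leftInverse_vecMul_transpose_fromRows_one {R ι κ : Type*} [CommSemiring R]
    [Fintype ι] [DecidableEq ι] (M : Matrix κ ι R) :
    Function.LeftInverse (fun y : ι ⊕ κ → R => fun j => y (Sum.inl j))
      (fun x : ι → R => x ᵥ* (fromRows 1 M)ᵀ) := by
  intro x
  funext j
  simp only [vecMul_transpose, fromRows_mulVec, one_mulVec, Sum.elim_inl]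

theorem egs_invariant_to_redundant_agents_general {m n : ℕ}
    (A : Matrix (Fin m) (Fin m) ℝ)
    (M : Matrix (Fin n) (Fin m) ℝ)
    (hM0 : ∀ i j, 0 ≤ M i j) (hM1 : ∀ i, ∑ j, M i j = 1) :
    let N : Matrix (Fin m ⊕ Fin n) (Fin m) ℝ := Matrix.fromRows 1 M
    let AQ : Matrix (Fin m ⊕ Fin n) (Fin m ⊕ Fin n) ℝ := N * A * Nᵀ
    Function.Injective (fun x : Fin m → ℝ => Matrix.vecMul x Nᵀ) ∧
    convexHull ℝ (Set.range AQ) =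
      (fun x : Fin m → ℝ => Matrix.vecMul x Nᵀ) '' convexHull ℝ (Set.range A) ∧
    (fun y : Fin m ⊕ Fin n → ℝ => fun j => y (Sum.inl j)) '' convexHull ℝ (Set.range AQ) =
      convexHull ℝ (Set.range A) := by
  intro N AQ
  have hleft := leftInverse_vecMul_transpose_fromRows_one M
  have hhull : convexHull ℝ (Set.range AQ) = (· ᵥ* Nᵀ) '' convexHull ℝ (Set.range A) := by
    rw [convexHull_range_mul_s17, fromRows_mul, one_mul,
      convexHull_range_fromRows_of_subset _ _ (range_mul_subset_convexHull_range M A hM0 hM1)]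
  exact ⟨hleft.injective, hhull, by rw [hhull, hleft.image_image]⟩

/-- Proposition 1: the empirical gamescape is invariant to redundant agents. If the
population is enlarged by agents that are convex mixtures (given by a row-stochastic
`M`) of existing agents, the convex hull of the rows of the enlarged evaluation matrix
`A_Q = N·A·Nᵀ` (with `N = [I; M]`) is the image of the original gamescape under an
injective linear map, and projecting back onto the original coordinates recovers the
original gamescape. -/
theorem egs_invariant_to_redundant_agents {m n : ℕ}
    (A : Matrix (Fin m) (Fin m) ℝ) (hA : Aᵀ = -A)
    (M : Matrix (Fin n) (Fin m) ℝ)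
    (hM0 : ∀ i j, 0 ≤ M i j) (hM1 : ∀ i, ∑ j, M i j = 1) :
    let N : Matrix (Fin m ⊕ Fin n) (Fin m) ℝ := Matrix.fromRows 1 M
    let AQ : Matrix (Fin m ⊕ Fin n) (Fin m ⊕ Fin n) ℝ := N * A * Nᵀ
    Function.Injective (fun x : Fin m → ℝ => Matrix.vecMul x Nᵀ) ∧
    convexHull ℝ (Set.range AQ) =
      (fun x : Fin m → ℝ => Matrix.vecMul x Nᵀ) '' convexHull ℝ (Set.range A) ∧
    (fun y : Fin m ⊕ Fin n → ℝ => fun j => y (Sum.inl j)) '' convexHull ℝ (Set.range AQ) =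
      convexHull ℝ (Set.range A) :=
  egs_invariant_to_redundant_agents_general A M hM0 hM1
end
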